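/- arXiv:1404.5871 — 3 statements merged into one kernel-verified Lean document; each statement's English description precedes it below -/
import Mathlib

section
/- Let K be a field and F, G ∈ K[x,y] be relatively prime nonzero homogeneous polynomials of degrees a and b respectively, with a, b ≥ 1. Then the ideal ⟨F,G⟩ contains ⟨x,y⟩^{a+b-1}, i.e., every monomial of degree a+b-1 lies in ⟨F,G⟩. -/
/-!
Multiplication `(S, T) ↦ F * S + G * T` is a linear map from pairs of forms of degrees
`b - 1, a - 1` to forms of degree `a + b - 1`. It is injective: `F * S = -G * T` with `F, G`
coprime gives `F ∣ T`, impossible for a nonzero `T` of degree `a - 1 < a`, and symmetrically for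
`S`. In two variables the forms of degree `n` span a space of dimension `n + 1`, so source and
target both have dimension `a + b` and the map is onto. Since `⟨x, y⟩^(a+b-1)` is generated by
monomials of degree `a + b - 1`, it lies in `⟨F, G⟩`.
-/

open MvPolynomial
open scoped Pointwise

lemma Finsupp.setOf_degree_eq_coe_finsuppAntidiag {σ : Type*} [Fintype σ] [DecidableEq σ]
    (n : ℕ) : {d : σ →₀ ℕ | d.degree = n} = ↑((Finset.univ : Finset σ).finsuppAntidiag n) := by
  ext d
  simp [Finsupp.degree_eq_sum]

namespace MvPolynomial

variable {σ K : Type*} [Field K]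

noncomputable def homogeneousSubmoduleEquivFinsupp [Fintype σ] [DecidableEq σ] (n : ℕ) :
    homogeneousSubmodule σ K n ≃ₗ[K] ((Finset.univ : Finset σ).finsuppAntidiag n →₀ K) :=
  (LinearEquiv.ofEq _ _ ((homogeneousSubmodule_eq_finsupp_supported σ K n).trans
    (by rw [Finsupp.setOf_degree_eq_coe_finsuppAntidiag]))).trans
    (AddMonoidAlgebra.supportedEquivFinsupp (R := K) (S := K) _)

instance [Finite σ] (n : ℕ) : FiniteDimensional K (homogeneousSubmodule σ K n) := by
  classical
  have := Fintype.ofFinite σ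
  exact Module.Finite.equiv (homogeneousSubmoduleEquivFinsupp n).symm

lemma finrank_homogeneousSubmodule [Fintype σ] (n : ℕ) :
    Module.finrank K (homogeneousSubmodule σ K n) = (Fintype.card σ + n - 1).choose n := by
  classical
  rw [(homogeneousSubmoduleEquivFinsupp n).finrank_eq, Module.finrank_finsupp_self]
  simp [Finset.card_finsuppAntidiag_nat_eq_choose]

lemma finrank_homogeneousSubmodule_fin_two (n : ℕ) :
    Module.finrank K (homogeneousSubmodule (Fin 2) K n) = n + 1 := by
  rw [finrank_homogeneousSubmodule, Fintype.card_fin, show 2 + n - 1 = n + 1 by omega,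
    Nat.choose_succ_self_right]

lemma IsHomogeneous.eq_zero_of_dvd_of_lt {R : Type*} [CommRing R] [IsDomain R] {m n : ℕ}
    {F T : MvPolynomial σ R} (hF : F.IsHomogeneous n) (hT : T.IsHomogeneous m)
    (hmn : m < n) (hdvd : F ∣ T) : T = 0 := by
  by_contra hT0
  have hF0 : F ≠ 0 := by rintro rfl; exact hT0 (zero_dvd_iff.mp hdvd)
  have := totalDegree_le_of_dvd_of_isDomain hdvd hT0
  rw [hF.totalDegree hF0, hT.totalDegree hT0] at this
  omega

lemma isHomogeneous_of_mem_pow {R : Type*} [CommSemiring R] {s : Set (MvPolynomial σ R)} {k : ℕ}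
    (hs : ∀ p ∈ s, p.IsHomogeneous k) (n : ℕ) : ∀ p ∈ s ^ n, p.IsHomogeneous (k * n) := by
  induction n with
  | zero =>
    rintro p hp
    rw [pow_zero, Set.mem_one] at hp
    subst hp
    exact isHomogeneous_one σ R
  | succ n ih =>
    rintro _ ⟨p, hp, q, hq, rfl⟩
    exact (ih p hp).mul (hs q hq)

section Combination

variable {F G : MvPolynomial σ K} {a b i j n : ℕ}

noncomputable def homogeneousCombination (hF : F.IsHomogeneous a) (hG : G.IsHomogeneous b)
    (hi : a + i = n) (hj : b + j = n) :
    homogeneousSubmodule σ K i × homogeneousSubmodule σ K j →ₗ[K] homogeneousSubmodule σ K n :=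
  LinearMap.codRestrict _
    (((LinearMap.mulLeft K F).comp (homogeneousSubmodule σ K i).subtype).coprod
      ((LinearMap.mulLeft K G).comp (homogeneousSubmodule σ K j).subtype))
    fun ST => (hi ▸ hF.mul ST.1.2).add (hj ▸ hG.mul ST.2.2)

@[simp]
lemma coe_homogeneousCombination_apply (hF : F.IsHomogeneous a) (hG : G.IsHomogeneous b)
    (hi : a + i = n) (hj : b + j = n) (ST) :
    (homogeneousCombination hF hG hi hj ST : MvPolynomial σ K) = F * ST.1 + G * ST.2 := rfl

lemma injective_homogeneousCombination (hF : F.IsHomogeneous a) (hG : G.IsHomogeneous b)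
    (hi : a + i = n) (hj : b + j = n) (hFG : IsRelPrime F G) (hib : i < b) (hja : j < a) :
    Function.Injective (homogeneousCombination hF hG hi hj) := by
  rw [injective_iff_map_eq_zero]
  rintro ⟨S, T⟩ hST
  have hsum : F * S + G * T = 0 := congrArg Subtype.val hST
  have hS : (S : MvPolynomial σ K) = 0 :=
    hG.eq_zero_of_dvd_of_lt S.2 hib <|
      hFG.symm.dvd_of_dvd_mul_left ⟨-T, by linear_combination hsum⟩
  have hT : (T : MvPolynomial σ K) = 0 :=
    hF.eq_zero_of_dvd_of_lt T.2 hja <|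
      hFG.dvd_of_dvd_mul_left ⟨-S, by linear_combination hsum⟩
  ext <;> simp [hS, hT]

end Combination

lemma surjective_homogeneousCombination_fin_two {F G : MvPolynomial (Fin 2) K} {a b i j n : ℕ}
    (hF : F.IsHomogeneous a) (hG : G.IsHomogeneous b) (hi : a + i = n) (hj : b + j = n)
    (hFG : IsRelPrime F G) (hib : i < b) (hja : j < a) (hij : i + j + 1 = n) :
    Function.Surjective (homogeneousCombination hF hG hi hj) := by
  rw [← LinearMap.injective_iff_surjective_of_finrank_eq_finrank]
  · exact injective_homogeneousCombination hF hG hi hj hFG hib hja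
  rw [Module.finrank_prod]
  simp only [finrank_homogeneousSubmodule_fin_two]
  omega

lemma mem_span_pair_of_isHomogeneous_fin_two {F G p : MvPolynomial (Fin 2) K} {a b : ℕ}
    (ha : 1 ≤ a) (hb : 1 ≤ b) (hF : F.IsHomogeneous a) (hG : G.IsHomogeneous b)
    (hFG : IsRelPrime F G) (hp : p.IsHomogeneous (a + b - 1)) :
    p ∈ Ideal.span {F, G} := by
  obtain ⟨⟨S, T⟩, hST⟩ := surjective_homogeneousCombination_fin_two hF hG
    (i := b - 1) (j := a - 1) (by omega) (by omega) hFG (by omega) (by omega) (by omega) ⟨p, hp⟩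
  exact Ideal.mem_span_pair.mpr ⟨S, T, by simpa [mul_comm] using congrArg Subtype.val hST⟩

end MvPolynomial

theorem stmt2_general (K : Type*) [Field K] (a b : ℕ) (ha : 1 ≤ a) (hb : 1 ≤ b)
    (F G : MvPolynomial (Fin 2) K)
    (hF : F.IsHomogeneous a) (hG : G.IsHomogeneous b)
    (hrel : IsRelPrime F G) :
    (Ideal.span {(X 0 : MvPolynomial (Fin 2) K), X 1}) ^ (a + b - 1) ≤
      Ideal.span {F, G} := by
  rw [Ideal.span, Submodule.span_pow, ← Ideal.span, Ideal.span_le]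
  intro p hp
  refine mem_span_pair_of_isHomogeneous_fin_two ha hb hF hG hrel ?_
  simpa using isHomogeneous_of_mem_pow (k := 1) (by simp [isHomogeneous_X]) _ p hp

/-- If `F, G ∈ K[x,y]` are relatively prime nonzero homogeneous polynomials of degrees
`a, b ≥ 1`, then `⟨x,y⟩^(a+b-1) ⊆ ⟨F,G⟩`. -/
theorem stmt2 (K : Type*) [Field K] (a b : ℕ) (ha : 1 ≤ a) (hb : 1 ≤ b)
    (F G : MvPolynomial (Fin 2) K) (hF0 : F ≠ 0) (hG0 : G ≠ 0)
    (hF : F.IsHomogeneous a) (hG : G.IsHomogeneous b)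
    (hrel : IsRelPrime F G) :
    (Ideal.span {(X 0 : MvPolynomial (Fin 2) K), X 1}) ^ (a + b - 1) ≤
      Ideal.span {F, G} :=
  stmt2_general K a b ha hb F G hF hG hrel
end

section
/- Fix a prime p and D ∈ ℕ_{>0}. Let u₁, u₂, u₃ ∈ (0,1) be real numbers with u₁ + u₂ + u₃ = 2, having non-terminating base p expansions uᵢ = Σ_{s≥1} dᵢ,ₛ p^{-s}. Suppose e ≥ 1 is minimal with d₁,ₑ + d₂,ₑ + d₃,ₑ ≠ 2p - 2 (and such e exists). Then d₁,ₑ + d₂,ₑ + d₃,ₑ equals either 2p - 1 or 2p - 3. -/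
/-!
Write `c s` for the digit sum at position `s`. Since `∑ₛ c s / p^(s+1) = 2` and
`c s = 2(p-1)` for `s < e`, the first `e` positions contribute `2(1 - p^(-e))`,
so `c e + τ = 2p`, where `τ` is the sum of the three tails `0.dᵢ,ₑ₊₁dᵢ,ₑ₊₂… ∈ [0,1]`.
Non-termination makes `τ > 0`, hence `2p - 3 ≤ c e < 2p`, and `c e ≠ 2p - 2` leaves
`2p - 1` and `2p - 3`.
-/

open Finset Real

theorem sum_range_sub_one_div_pow_succ {K : Type*} [Field K] {x : K} (hx : x ≠ 0) (n : ℕ) :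
    ∑ i ∈ range n, (x - 1) / x ^ (i + 1) = 1 - 1 / x ^ n := by
  induction n with
  | zero => simp
  | succ n ih =>
    rw [sum_range_succ, ih]
    field_simp
    ring

namespace Real

theorem ofDigits_pos {b : ℕ} {a : ℕ → Fin b} {n : ℕ} (hn : (a n : ℕ) ≠ 0) :
    0 < ofDigits a := by
  have hb : (0 : ℝ) < b := by exact_mod_cast (a n).pos
  refine summable_ofDigitsTerm.tsum_pos (fun _ => ofDigitsTerm_nonneg) n ?_
  unfold ofDigitsTerm
  have : (0 : ℝ) < (a n : ℕ) := by exact_mod_cast Nat.pos_of_ne_zero hn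
  positivity

variable {ι : Type*} [Fintype ι] {b : ℕ} {a : ι → ℕ → Fin b} {m e : ℕ}

theorem sum_digits_add_sum_ofDigits_tail (hb : 0 < b)
    (hsum : ∑ i, ofDigits (a i) = m)
    (hprefix : ∀ s < e, ∑ i, (a i s : ℕ) = m * (b - 1)) :
    ((∑ i, (a i e : ℕ) : ℕ) : ℝ) + ∑ i, ofDigits (fun s => a i (s + (e + 1))) =
      m * b := by
  have hb' : (b : ℝ) ≠ 0 := by positivity
  have hterm : ∀ s,
      ∑ i, ofDigitsTerm (a i) s = ((∑ i, (a i s : ℕ) : ℕ) : ℝ) / b ^ (s + 1) := fun s => by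
    simp only [ofDigitsTerm, Nat.cast_sum, sum_mul, div_eq_mul_inv]
  have hhead : ∑ s ∈ range e, ∑ i, ofDigitsTerm (a i) s = m * (1 - 1 / (b : ℝ) ^ e) := by
    rw [← sum_range_sub_one_div_pow_succ hb', mul_sum]
    refine sum_congr rfl fun s hs => ?_
    rw [hterm, hprefix s (mem_range.1 hs), Nat.cast_mul, Nat.cast_sub hb, mul_div_assoc]
    norm_num
  have hsplit : ∀ i, ofDigits (a i) =
      ∑ s ∈ range e, ofDigitsTerm (a i) s + ofDigitsTerm (a i) e +
        ((b : ℝ) ^ (e + 1))⁻¹ * ofDigits (fun s => a i (s + (e + 1))) := fun i => by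
    rw [ofDigits_eq_sum_add_ofDigits _ (e + 1), sum_range_succ]
  simp only [hsplit, sum_add_distrib] at hsum
  rw [sum_comm, hhead, hterm, ← mul_sum] at hsum
  field_simp at hsum
  exact mul_left_cancel₀ (pow_ne_zero e hb') (by linear_combination hsum)

theorem sum_digits_mem_Ico (hb : 0 < b)
    (hsum : ∑ i, ofDigits (a i) = m)
    (hprefix : ∀ s < e, ∑ i, (a i s : ℕ) = m * (b - 1))
    (hnt : ∃ i, ∃ s > e, (a i s : ℕ) ≠ 0) :
    ∑ i, (a i e : ℕ) ∈ Set.Ico (m * b - Fintype.card ι) (m * b) := by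
  have key := sum_digits_add_sum_ofDigits_tail hb hsum hprefix
  have htail_pos : 0 < ∑ i, ofDigits (fun s => a i (s + (e + 1))) := by
    obtain ⟨i, s, hs, hne⟩ := hnt
    refine sum_pos' (fun i _ => ofDigits_nonneg _)
      ⟨i, mem_univ i, ofDigits_pos (n := s - (e + 1)) ?_⟩
    rwa [Nat.sub_add_cancel hs]
  have htail_le : ∑ i, ofDigits (fun s => a i (s + (e + 1))) ≤ Fintype.card ι := by
    simpa using sum_le_sum fun i (_ : i ∈ univ) => ofDigits_le_one (fun s => a i (s + (e + 1)))
  have hlt : ((∑ i, (a i e : ℕ) : ℕ) : ℝ) < (m * b : ℕ) := by rw [Nat.cast_mul]; linarith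
  have hle : ((m * b : ℕ) : ℝ) ≤ (∑ i, (a i e : ℕ) + Fintype.card ι : ℕ) := by
    rw [Nat.cast_mul, Nat.cast_add]; linarith
  exact ⟨Nat.sub_le_of_le_add (by exact_mod_cast hle), by exact_mod_cast hlt⟩

end Real

theorem stmt11_general (p : ℕ) (u : Fin 3 → ℝ) (d : Fin 3 → ℕ → ℕ)
    (hsum : u 0 + u 1 + u 2 = 2)
    (hdig : ∀ i s, d i s < p)
    (hexp : ∀ i, u i = ∑' s : ℕ, (d i s : ℝ) / p ^ (s + 1))
    (hnt : ∀ i N, ∃ s, N ≤ s ∧ d i s ≠ 0)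
    (e : ℕ)
    (hmin : ∀ s < e, d 0 s + d 1 s + d 2 s = 2 * p - 2)
    (he : d 0 e + d 1 e + d 2 e ≠ 2 * p - 2) :
    d 0 e + d 1 e + d 2 e = 2 * p - 1 ∨ d 0 e + d 1 e + d 2 e = 2 * p - 3 := by
  let a : Fin 3 → ℕ → Fin p := fun i s => ⟨d i s, hdig i s⟩
  have hval : ∀ i, u i = ofDigits (a i) := fun i => by
    simp only [hexp, ofDigits, ofDigitsTerm, div_eq_mul_inv, a]
  have hbounds := sum_digits_mem_Ico (a := a) (m := 2) (e := e) (Nat.zero_lt_of_lt (hdig 0 0))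
    (by simp [Fin.sum_univ_three, ← hval, hsum])
    (fun s hs => by simp only [Fin.sum_univ_three, a, hmin s hs]; omega)
    (by obtain ⟨s, hs, hne⟩ := hnt 0 (e + 1); exact ⟨0, s, hs, hne⟩)
  simp only [Fin.sum_univ_three, Fintype.card_fin, Set.mem_Ico, a] at hbounds
  omega

/-- Digit lemma for the Sierpiński staircase: if `u₁,u₂,u₃ ∈ (0,1)` sum to `2`, with
non-terminating base-`p` expansions `uᵢ = Σ_{s≥0} dᵢ(s)/p^(s+1)`, and `e` is minimal with
digit sum at position `e` different from `2p−2`, then that digit sum is `2p−1` or `2p−3`. -/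
theorem stmt11 (p : ℕ) (hp : p.Prime) (u : Fin 3 → ℝ) (d : Fin 3 → ℕ → ℕ)
    (hu : ∀ i, u i ∈ Set.Ioo (0 : ℝ) 1)
    (hsum : u 0 + u 1 + u 2 = 2)
    (hdig : ∀ i s, d i s < p)
    (hexp : ∀ i, u i = ∑' s : ℕ, (d i s : ℝ) / p ^ (s + 1))
    (hnt : ∀ i N, ∃ s, N ≤ s ∧ d i s ≠ 0)
    (e : ℕ)
    (hmin : ∀ s < e, d 0 s + d 1 s + d 2 s = 2 * p - 2)
    (he : d 0 e + d 1 e + d 2 e ≠ 2 * p - 2) :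
    d 0 e + d 1 e + d 2 e = 2 * p - 1 ∨ d 0 e + d 1 e + d 2 e = 2 * p - 3 :=
  stmt11_general p u d hsum hdig hexp hnt e hmin he
end

section
/- Let K be a field of characteristic p, u,v,w positive integers with u prime to p, q a power of p, and a, b, c₁,…,c_m, i, j nonnegative integers. Suppose x^a y^b ∏_{i=1}^m (x^{uw} − μᵢ y^{uw})^{cᵢ} ∈ ⟨x^{uq}, y^{vq}⟩ in K[x,y] with a > 0, where the μᵢ ∈ K are nonzero and distinct, and suppose there is a monomial M = x^{a + i·uw} y^{b + j·uw} in the support of this product such that M/x ∉ ⟨x^{uq}, y^{vq}⟩. Then a + i·uw = uq. -/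
open MvPolynomial

/-- Analysis of block critical points: if
`P = x^a y^b ∏ᵢ (x^{uw} − μᵢ y^{uw})^{cᵢ} ∈ ⟨x^{uq}, y^{vq}⟩` with `a > 0`, the `μᵢ`
nonzero and distinct, and some monomial `M = x^{a+i·uw} y^{b+j·uw}` in the support of `P`
satisfies `M/x ∉ ⟨x^{uq}, y^{vq}⟩`, then `a + i·uw = uq`. -/
theorem stmt17 (p : ℕ) (hp : p.Prime) (K : Type*) [Field K] [CharP K p]
    (u v w : ℕ) (hu : 0 < u) (hv : 0 < v) (hw : 0 < w) (hup : ¬ p ∣ u)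
    (e q : ℕ) (hq : q = p ^ e)
    (m : ℕ) (μ : Fin m → K) (hμ0 : ∀ k, μ k ≠ 0) (hμinj : Function.Injective μ)
    (a b : ℕ) (ha : 0 < a) (c : Fin m → ℕ) (i j : ℕ)
    (P : MvPolynomial (Fin 2) K)
    (hP : P = X 0 ^ a * X 1 ^ b *
      ∏ k : Fin m, (X 0 ^ (u * w) - C (μ k) * X 1 ^ (u * w)) ^ c k)
    (hmem : P ∈ Ideal.span {(X 0 : MvPolynomial (Fin 2) K) ^ (u * q), X 1 ^ (v * q)})
    (hcoeff : coeff (Finsupp.single (0 : Fin 2) (a + i * (u * w)) +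
      Finsupp.single (1 : Fin 2) (b + j * (u * w))) P ≠ 0)
    (hnot : (monomial (Finsupp.single (0 : Fin 2) (a + i * (u * w) - 1) +
        Finsupp.single (1 : Fin 2) (b + j * (u * w))) (1 : K)) ∉
      Ideal.span {(X 0 : MvPolynomial (Fin 2) K) ^ (u * q), X 1 ^ (v * q)}) :
    a + i * (u * w) = u * q := by
  have hset : ({(X 0 : MvPolynomial (Fin 2) K) ^ (u * q), X 1 ^ (v * q)} : Set _) =
      (fun s => monomial s (1 : K)) ''
        {Finsupp.single (0 : Fin 2) (u * q), Finsupp.single (1 : Fin 2) (v * q)} := by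
    rw [Set.image_pair, X_pow_eq_monomial, X_pow_eq_monomial]
  rw [hset, mem_ideal_span_monomial_image] at hmem hnot
  -- M is in the support of P
  have hMsupp : (Finsupp.single (0 : Fin 2) (a + i * (u * w)) +
      Finsupp.single (1 : Fin 2) (b + j * (u * w))) ∈ P.support :=
    mem_support_iff.mpr hcoeff
  obtain ⟨si, hsi, hle⟩ := hmem _ hMsupp
  push_neg at hnot
  obtain ⟨xi, hxi, hno⟩ := hnot
  classical
  rw [support_monomial, if_neg one_ne_zero, Finset.mem_singleton] at hxi
  subst hxi
  have h1 := hno (Finsupp.single (0 : Fin 2) (u * q)) (Or.inl rfl)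
  have h2 := hno (Finsupp.single (1 : Fin 2) (v * q)) (Or.inr rfl)
  have hval : ∀ (n n' : ℕ) (k : Fin 2),
      (Finsupp.single k n ≤ Finsupp.single (0 : Fin 2) n' +
        Finsupp.single (1 : Fin 2) (b + j * (u * w))) ↔
      n ≤ (Finsupp.single (0 : Fin 2) n' +
        Finsupp.single (1 : Fin 2) (b + j * (u * w))) k := by
    intro n n' k
    constructor
    · intro h; simpa using h k
    · intro h; intro l
      by_cases hlk : l = k
      · subst hlk; simpa using h
      · simp [Finsupp.single_apply, Ne.symm hlk]
  rw [hval] at h1 h2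
  simp only [Finsupp.add_apply, Finsupp.single_apply] at h1 h2
  norm_num at h1 h2
  -- from hle: either uq ≤ a + iuw or vq ≤ b + juw
  rcases hsi with rfl | rfl
  · have := hval (u*q) (a + i*(u*w)) 0 |>.mp hle
    simp only [Finsupp.add_apply, Finsupp.single_apply] at this
    norm_num at this
    omega
  · have := hval (v*q) (a + i*(u*w)) 1 |>.mp hle
    simp only [Finsupp.add_apply, Finsupp.single_apply] at this
    norm_num at this
    omega
end
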